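/- arXiv:2101.02256 — 4 statements merged into one kernel-verified Lean document; each statement's English description precedes it below -/
import Mathlib

section
/- If $A$ is an $n\times n$ real positive definite matrix with smallest eigenvalue $\lambda_{\min}$, then for every vector $y$ with $\|y\|_\infty = 1$, we have $\|Ay\|_\infty \geq \frac{2\lambda_{\min}}{\sqrt{n}+1}$. -/
/-!
The Rayleigh bound and Hölder's inequality give `λ ‖y‖₂² ≤ yᵀ A y ≤ ‖y‖₁ ‖A y‖_∞`. If some
`|y i₀| = 1`, the `i₀`-term alone shows `∑ ((√n + 1) |y i| - 1)² ≥ n`, which expands to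
`2 ‖y‖₁ ≤ (√n + 1) ‖y‖₂²`; dividing by `‖y‖₁ ≥ 1` gives the claim.
-/

open Matrix
open scoped MatrixOrder

theorem Matrix.IsHermitian.mul_dotProduct_self_le {ι : Type*} [Fintype ι] [DecidableEq ι]
    {A : Matrix ι ι ℝ} (hA : A.IsHermitian) {lam : ℝ} (hle : ∀ i, lam ≤ hA.eigenvalues i)
    (y : ι → ℝ) : lam * (y ⬝ᵥ y) ≤ y ⬝ᵥ A *ᵥ y := by
  have hpsd : (A - algebraMap ℝ _ lam).PosSemidef := algebraMap_le_of_le_spectrum fun x hx => by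
    rw [hA.spectrum_real_eq_range_eigenvalues] at hx
    obtain ⟨i, rfl⟩ := hx
    exact hle i
  simpa [sub_mulVec, Algebra.algebraMap_eq_smul_one, smul_mulVec, dotProduct_sub] using
    hpsd.dotProduct_mulVec_nonneg y

theorem dotProduct_le_sum_abs_mul_norm {ι : Type*} [Fintype ι] (x y : ι → ℝ) :
    x ⬝ᵥ y ≤ (∑ i, |x i|) * ‖y‖ := by
  rw [dotProduct, Finset.sum_mul]
  refine Finset.sum_le_sum fun i _ => ?_
  calc x i * y i ≤ |x i| * |y i| := by rw [← abs_mul]; exact le_abs_self _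
    _ ≤ |x i| * ‖y‖ := by gcongr; exact norm_le_pi_norm y i

theorem exists_abs_eq_of_norm_eq_one {ι : Type*} [Fintype ι] {y : ι → ℝ} (hy : ‖y‖ = 1) :
    ∃ i, |y i| = 1 := by
  cases isEmpty_or_nonempty ι
  · simp [Subsingleton.elim y 0] at hy
  · obtain ⟨i, hi⟩ := (IsGreatest.pi_norm y).1
    exact ⟨i, hi.trans hy⟩

theorem two_mul_sum_abs_le_of_abs_eq_one {ι : Type*} [Fintype ι] {y : ι → ℝ} {i₀ : ι}
    (hi₀ : |y i₀| = 1) :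
    2 * ∑ i, |y i| ≤ (√(Fintype.card ι) + 1) * (y ⬝ᵥ y) := by
  set r := √(Fintype.card ι)
  have hr : r ^ 2 = Fintype.card ι := Real.sq_sqrt (Nat.cast_nonneg _)
  have hsum : r ^ 2 ≤ ∑ i, ((r + 1) * |y i| - 1) ^ 2 := by
    simpa [hi₀] using Finset.single_le_sum (fun i _ => sq_nonneg ((r + 1) * |y i| - 1))
      (Finset.mem_univ i₀)
  have hterm (i : ι) : ((r + 1) * |y i| - 1) ^ 2
      = (r + 1) ^ 2 * (y i * y i) - 2 * (r + 1) * |y i| + 1 := by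
    rw [← abs_mul_abs_self (y i)]
    ring
  simp only [hterm, Finset.sum_add_distrib, Finset.sum_sub_distrib, ← Finset.mul_sum,
    Finset.sum_const, Finset.card_univ, nsmul_eq_mul, mul_one, ← hr] at hsum
  have hscaled : (r + 1) * (2 * ∑ i, |y i|) ≤ (r + 1) * ((r + 1) * (y ⬝ᵥ y)) := by
    rw [dotProduct]
    linarith
  exact le_of_mul_le_mul_left hscaled (by positivity)

theorem stmt_0_general {n : ℕ} (A : Matrix (Fin n) (Fin n) ℝ) (hA : A.PosDef)
    (lam : ℝ) (hle : ∀ i, lam ≤ hA.1.eigenvalues i)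
    (y : Fin n → ℝ) (hy : ‖y‖ = 1) :
    2 * lam / (Real.sqrt n + 1) ≤ ‖A.mulVec y‖ := by
  rcases le_or_gt lam 0 with hlam | hlam
  · exact (div_nonpos_of_nonpos_of_nonneg (by linarith) (by positivity)).trans (norm_nonneg _)
  obtain ⟨i₀, hi₀⟩ := exists_abs_eq_of_norm_eq_one hy
  have hL : 1 ≤ ∑ i, |y i| :=
    hi₀ ▸ Finset.single_le_sum (fun i _ => abs_nonneg (y i)) (Finset.mem_univ i₀)
  have hcomb := two_mul_sum_abs_le_of_abs_eq_one hi₀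
  rw [Fintype.card_fin] at hcomb
  have hquad := (hA.1.mul_dotProduct_self_le hle y).trans (dotProduct_le_sum_abs_mul_norm y _)
  have hscaled : (∑ i, |y i|) * (2 * lam) ≤ (∑ i, |y i|) * (‖A *ᵥ y‖ * (√n + 1)) :=
    calc (∑ i, |y i|) * (2 * lam) = lam * (2 * ∑ i, |y i|) := by ring
      _ ≤ lam * ((√n + 1) * (y ⬝ᵥ y)) := by gcongr
      _ = (√n + 1) * (lam * (y ⬝ᵥ y)) := by ring
      _ ≤ (√n + 1) * ((∑ i, |y i|) * ‖A *ᵥ y‖) := by gcongr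
      _ = (∑ i, |y i|) * (‖A *ᵥ y‖ * (√n + 1)) := by ring
  rw [div_le_iff₀ (by positivity)]
  exact le_of_mul_le_mul_left hscaled (by linarith)

/-- If `A` is an `n × n` real positive definite matrix with smallest
eigenvalue `lam`, then for every vector `y` with `‖y‖_∞ = 1`,
`‖A y‖_∞ ≥ 2 lam / (√n + 1)`.  The Pi norm on `Fin n → ℝ` is the sup norm. -/
theorem stmt_0 {n : ℕ} (hn : 1 ≤ n) (A : Matrix (Fin n) (Fin n) ℝ) (hA : A.PosDef)
    (lam : ℝ) (hle : ∀ i, lam ≤ hA.1.eigenvalues i) (hex : ∃ i, hA.1.eigenvalues i = lam)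
    (y : Fin n → ℝ) (hy : ‖y‖ = 1) :
    2 * lam / (Real.sqrt n + 1) ≤ ‖A.mulVec y‖ :=
  stmt_0_general A hA lam hle y hy
end

section
/- If $A$ is an $n\times n$ real positive definite matrix with smallest eigenvalue $\lambda_{\min}$, then the operator norm of $A^{-1}$ with respect to the $\ell_\infty$ norm satisfies $\|A^{-1}\|_\infty \leq \frac{\sqrt{n}+1}{2\lambda_{\min}}$. -/
/-!
Let `B = A⁻¹` and let `b` be its `i`-th row. Then `bᵀ A b = b i = B i i`, while `A ≥ λ` gives
`bᵀ A b ≥ λ ‖b‖₂²`; so `λ (t² + S) ≤ t` with `t = B i i` and `S` the sum of the squares of the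
off-diagonal entries of the row. By Cauchy–Schwarz those entries have `ℓ¹` mass at most
`√((n - 1) S) ≤ √((n - 1) (t / λ - t²))`, and maximizing `t + √((n - 1) (t / λ - t²))` over `t`
gives `(√n + 1) / (2 λ)`. The `ℓ∞` operator norm is the largest `ℓ¹` norm of a row.
-/

/-- The operator norm of the linear map `z ↦ A z` on `Fin n → ℝ`, where the
Pi norm on `Fin n → ℝ` is the sup (ℓ∞) norm; hence this is the ℓ∞-induced
operator norm of the matrix `A`. -/
noncomputable def matOpNormInf {m n : ℕ} (A : Matrix (Fin m) (Fin n) ℝ) : ℝ :=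
  ‖LinearMap.toContinuousLinearMap A.mulVecLin‖

open Finset Matrix

open scoped MatrixOrder Matrix.Norms.L2Operator in
theorem Matrix.IsHermitian.posSemidef_sub_smul_one {ι : Type*} [Fintype ι] [DecidableEq ι]
    {A : Matrix ι ι ℝ} (hA : A.IsHermitian) {lam : ℝ} (hle : ∀ i, lam ≤ hA.eigenvalues i) :
    (A - lam • 1).PosSemidef := by
  rw [← nonneg_iff_posSemidef, sub_nonneg, ← Algebra.algebraMap_eq_smul_one,
    algebraMap_le_iff_le_spectrum, hA.spectrum_real_eq_range_eigenvalues]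
  rintro _ ⟨i, rfl⟩
  exact hle i

theorem Matrix.PosSemidef.mul_sum_sq_inv_le_inv_apply_self {ι : Type*} [Fintype ι]
    [DecidableEq ι] {A : Matrix ι ι ℝ} {lam : ℝ} (hA : (A - lam • 1).PosSemidef)
    (hdet : IsUnit A.det) (i : ι) :
    lam * ∑ j, A⁻¹ i j ^ 2 ≤ A⁻¹ i i := by
  have hrow : A⁻¹ i ᵥ* A = Pi.single i 1 := by
    rw [← mul_apply_eq_vecMul, nonsing_inv_mul A hdet]
    exact funext fun _ => one_eq_pi_single
  have h := hA.dotProduct_mulVec_nonneg (A⁻¹ i)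
  rw [star_trivial, sub_mulVec, dotProduct_sub, dotProduct_mulVec, hrow, smul_mulVec, one_mulVec,
    dotProduct_smul, single_dotProduct, one_mul, smul_eq_mul, sub_nonneg] at h
  simpa [dotProduct, sq] using h

theorem sum_abs_le_of_mul_sum_sq_le {ι : Type*} [Fintype ι] [DecidableEq ι] {b : ι → ℝ}
    {lam : ℝ} (hlam : 0 < lam) {i : ι} (h : lam * ∑ j, b j ^ 2 ≤ b i) :
    ∑ j, |b j| ≤ (√(Fintype.card ι) + 1) / (2 * lam) := by
  set s := √(Fintype.card ι : ℝ)
  set t := b i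
  set S := ∑ j ∈ univ.erase i, b j ^ 2
  set u := ∑ j ∈ univ.erase i, |b j|
  have hcard : 1 ≤ Fintype.card ι := Fintype.card_pos_iff.mpr ⟨i⟩
  have hs : 1 ≤ s := Real.one_le_sqrt.mpr (by exact_mod_cast hcard)
  have hs2 : (Fintype.card ι : ℝ) = s ^ 2 := (Real.sq_sqrt (Nat.cast_nonneg _)).symm
  have hS : 0 ≤ S := sum_nonneg fun j _ => sq_nonneg _
  have hu : 0 ≤ u := sum_nonneg fun j _ => abs_nonneg _
  have hdiag : lam * (S + t ^ 2) ≤ t := by rwa [← sum_erase_add _ _ (mem_univ i)] at h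
  have hcs : u ^ 2 ≤ (s ^ 2 - 1) * S := by
    have := sq_sum_le_card_mul_sum_sq (s := univ.erase i) (f := fun j => |b j|)
    rw [card_erase_of_mem (mem_univ i), card_univ, Nat.cast_sub hcard, Nat.cast_one, hs2] at this
    simpa only [sq_abs] using this
  have ht : 0 ≤ t := le_trans (by positivity) hdiag
  have hlt : lam * t ≤ 1 := by nlinarith [mul_nonneg hlam.le hS]
  -- `(s + 1 - 2λt)² - 4λ(s² - 1)(t - λt²) = (s + 1 - 2λst)²`
  have hsq : (2 * lam * u) ^ 2 ≤ (s + 1 - 2 * lam * t) ^ 2 := by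
    have h1 : (2 * lam * u) ^ 2 ≤ 4 * lam ^ 2 * ((s ^ 2 - 1) * S) := by
      rw [mul_pow]; nlinarith
    have h2 : 4 * lam * (s ^ 2 - 1) * (lam * S) ≤ 4 * lam * (s ^ 2 - 1) * (t - lam * t ^ 2) :=
      mul_le_mul_of_nonneg_left (by linarith) (mul_nonneg (by positivity) (by nlinarith))
    nlinarith [sq_nonneg (s + 1 - 2 * lam * s * t)]
  have hlin : 2 * lam * u ≤ s + 1 - 2 * lam * t :=
    (pow_le_pow_iff_left₀ (by positivity) (by linarith) two_ne_zero).mp hsq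
  rw [← sum_erase_add _ _ (mem_univ i), abs_of_nonneg ht, le_div_iff₀ (by positivity)]
  linarith

attribute [local instance] Matrix.linftyOpNormedAddCommGroup in
theorem matOpNormInf_le_of_sum_abs_le {m n : ℕ} {A : Matrix (Fin m) (Fin n) ℝ} {C : ℝ}
    (hC0 : 0 ≤ C) (hC : ∀ i, ∑ j, |A i j| ≤ C) : matOpNormInf A ≤ C := by
  lift C to NNReal using hC0
  rw [show matOpNormInf A = ‖A‖ from (linfty_opNorm_eq_opNorm A).symm,
    linfty_opNorm_def, NNReal.coe_le_coe]
  refine Finset.sup_le fun i _ => ?_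
  rw [← NNReal.coe_le_coe, NNReal.coe_sum]
  exact hC i

theorem stmt_1_general {n : ℕ} (A : Matrix (Fin n) (Fin n) ℝ) (hA : A.PosDef)
    (lam : ℝ) (hle : ∀ i, lam ≤ hA.1.eigenvalues i) (hex : ∃ i, hA.1.eigenvalues i = lam) :
    matOpNormInf A⁻¹ ≤ (Real.sqrt n + 1) / (2 * lam) := by
  obtain ⟨i₀, rfl⟩ := hex
  have hlam := hA.eigenvalues_pos i₀
  have hrow := (hA.1.posSemidef_sub_smul_one hle).mul_sum_sq_inv_le_inv_apply_self
    hA.det_pos.ne'.isUnit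
  refine matOpNormInf_le_of_sum_abs_le (by positivity) fun i => ?_
  simpa using sum_abs_le_of_mul_sum_sq_le hlam (hrow i)

/-- If `A` is an `n × n` real positive definite matrix with smallest
eigenvalue `lam`, then `‖A⁻¹‖_∞ ≤ (√n + 1) / (2 lam)`. -/
theorem stmt_1 {n : ℕ} (hn : 1 ≤ n) (A : Matrix (Fin n) (Fin n) ℝ) (hA : A.PosDef)
    (lam : ℝ) (hle : ∀ i, lam ≤ hA.1.eigenvalues i) (hex : ∃ i, hA.1.eigenvalues i = lam) :
    matOpNormInf A⁻¹ ≤ (Real.sqrt n + 1) / (2 * lam) :=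
  stmt_1_general A hA lam hle hex
end

section
/- For every integer $n \geq 2$ and every real $a \geq 0$, the function $f(a) = \frac{1+(n-1)a^2}{1+(n-1)a}$ satisfies $f(a) \geq \frac{2}{\sqrt{n}+1}$, with equality at $a = \frac{1}{\sqrt{n}+1}$. -/
/-! With `s = √n` we have `n - 1 = (s - 1)(s + 1)`, and clearing denominators turns
`f(a) - 2/(s+1)` into `(s - 1)((s + 1)a - 1)² / ((s + 1)(1 + (n - 1)a))`, which is
nonnegative for `s ≥ 1` and vanishes exactly at `a = 1/(s + 1)`. -/

namespace QuadraticRatio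

lemma mul_sub_two_mul_eq (s a : ℝ) :
    (1 + (s ^ 2 - 1) * a ^ 2) * (s + 1) - 2 * (1 + (s ^ 2 - 1) * a)
      = (s - 1) * ((s + 1) * a - 1) ^ 2 := by
  ring

lemma two_div_le {s a : ℝ} (hs : 1 ≤ s) (ha : 0 ≤ a) :
    2 / (s + 1) ≤ (1 + (s ^ 2 - 1) * a ^ 2) / (1 + (s ^ 2 - 1) * a) := by
  have hden : 0 < 1 + (s ^ 2 - 1) * a := by
    have : 0 ≤ (s ^ 2 - 1) * a := mul_nonneg (by nlinarith) ha
    linarith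
  rw [div_le_div_iff₀ (by linarith) hden, ← sub_nonneg, mul_sub_two_mul_eq]
  exact mul_nonneg (by linarith) (sq_nonneg _)

lemma eq_two_div_at_inv {s : ℝ} (hs : 0 < s) :
    (1 + (s ^ 2 - 1) * (1 / (s + 1)) ^ 2) / (1 + (s ^ 2 - 1) * (1 / (s + 1)))
      = 2 / (s + 1) := by
  have hs1 : s + 1 ≠ 0 := by positivity
  have hden : 1 + (s ^ 2 - 1) * (1 / (s + 1)) = s := by
    field_simp
    ring
  rw [hden, div_eq_div_iff hs.ne' hs1]
  field_simp
  ring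

end QuadraticRatio

/-- For every integer `n ≥ 2` and every real `a ≥ 0`, the function
`f(a) = (1+(n-1)a²)/(1+(n-1)a)` satisfies `f(a) ≥ 2/(√n+1)`, with equality at
`a = 1/(√n+1)`. -/
theorem stmt_3 (n : ℕ) (hn : 2 ≤ n) (a : ℝ) (ha : 0 ≤ a) :
    2 / (Real.sqrt n + 1) ≤ (1 + ((n : ℝ) - 1) * a ^ 2) / (1 + ((n : ℝ) - 1) * a) ∧
    (1 + ((n : ℝ) - 1) * (1 / (Real.sqrt n + 1)) ^ 2)
        / (1 + ((n : ℝ) - 1) * (1 / (Real.sqrt n + 1)))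
      = 2 / (Real.sqrt n + 1) := by
  have hs : 1 ≤ Real.sqrt n := Real.one_le_sqrt.2 (by exact_mod_cast (by omega : 1 ≤ n))
  have hn_sq : (n : ℝ) = Real.sqrt n ^ 2 := (Real.sq_sqrt n.cast_nonneg).symm
  generalize Real.sqrt n = s at hs hn_sq ⊢
  rw [hn_sq]
  exact ⟨QuadraticRatio.two_div_le hs ha, QuadraticRatio.eq_two_div_at_inv (by linarith)⟩
end

section
/- For every nonzero vector $y \in \mathbb{R}^n$ with $\|y\|_\infty = 1$, the ratio $\frac{\|y\|_2^2}{\|y\|_1}$ is at least $\frac{2}{\sqrt{n}+1}$. -/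
/-!
Fix an index `i₀` and put `a = |y i₀|`, `t = √n + 1`. Dropping all terms but the `i₀`-th from
`∑ (t |y i| - a)² ≥ (t a - a)² = n a²` and expanding gives `2 a ‖y‖₁ ≤ t ‖y‖₂²`.
With `i₀` an index where `|y i₀| = ‖y‖_∞ = 1`, also `‖y‖₁ ≥ 1 > 0`, and dividing yields the bound.
-/

open Finset

theorem two_mul_abs_mul_sum_abs_le_sqrt_card_add_one_mul_sum_sq {ι : Type*} [Fintype ι]
    (y : ι → ℝ) (i₀ : ι) :
    2 * |y i₀| * ∑ i, |y i| ≤ (√(Fintype.card ι) + 1) * ∑ i, y i ^ 2 := by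
  set a := |y i₀|
  set t := √(Fintype.card ι) + 1
  have ht : 0 < t := by positivity
  have hsq : (t - 1) ^ 2 = Fintype.card ι := by
    rw [add_sub_cancel_right, Real.sq_sqrt (Nat.cast_nonneg _)]
  have hexpand : ∑ i, (t * |y i| - a) ^ 2
      = t ^ 2 * ∑ i, y i ^ 2 - 2 * t * a * ∑ i, |y i| + Fintype.card ι * a ^ 2 := by
    simp only [sub_sq, mul_pow, sq_abs, sum_add_distrib, sum_sub_distrib, ← mul_sum, ← sum_mul,
      sum_const, card_univ, nsmul_eq_mul]
    ring
  have hsingle : (t * a - a) ^ 2 ≤ ∑ i, (t * |y i| - a) ^ 2 :=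
    single_le_sum (f := fun i ↦ (t * |y i| - a) ^ 2) (fun _ _ ↦ sq_nonneg _) (mem_univ i₀)
  have hlhs : (t * a - a) ^ 2 = Fintype.card ι * a ^ 2 := by rw [← hsq]; ring
  have hmul : 0 ≤ t * (t * ∑ i, y i ^ 2 - 2 * a * ∑ i, |y i|) := by linarith
  linarith [nonneg_of_mul_nonneg_right hmul ht]

theorem stmt_4_general {n : ℕ} (y : Fin n → ℝ) (hy : ‖y‖ = 1) :
    2 / (Real.sqrt n + 1) ≤ (∑ i, (y i) ^ 2) / (∑ i, |y i|) := by
  have hy0 : y ≠ 0 := by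
    rintro rfl
    simp at hy
  have : Nonempty (Fin n) := (Function.ne_iff.mp hy0).nonempty
  obtain ⟨⟨i₀, hi₀⟩, -⟩ := IsGreatest.pi_norm y
  replace hi₀ : |y i₀| = 1 := hi₀.trans hy
  have hbound := two_mul_abs_mul_sum_abs_le_sqrt_card_add_one_mul_sum_sq y i₀
  rw [hi₀, Fintype.card_fin] at hbound
  have hsum_pos : 0 < ∑ i, |y i| := zero_lt_one.trans_le <|
    hi₀ ▸ single_le_sum (fun i _ ↦ abs_nonneg (y i)) (mem_univ i₀)
  rw [div_le_div_iff₀ (by positivity) hsum_pos]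
  linarith

/-- For every vector `y ∈ ℝⁿ` with `‖y‖_∞ = 1` (the Pi norm on
`Fin n → ℝ` is the sup norm), the ratio `‖y‖₂² / ‖y‖₁` is at least `2/(√n+1)`. -/
theorem stmt_4 {n : ℕ} (hn : 1 ≤ n) (y : Fin n → ℝ) (hy : ‖y‖ = 1) :
    2 / (Real.sqrt n + 1) ≤ (∑ i, (y i) ^ 2) / (∑ i, |y i|) :=
  stmt_4_general y hy
end
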